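/- Fix a > 0 and ε with 0 < ε < 1/3, and for every positive integer k let S_k be a subset of T_k with p_k = Σ_{t ∈ S_k} P_bst(t). Let X_{n,k} denote the number of nodes v of a random binary search tree with n leaves whose fringe subtree t(v) belongs to S_k. Then there is a constant C > 0 (depending only on a and ε) such that Var(X_{n,k}) ≤ C·p_k·n/k² for all n and all integers k with a·ln n ≤ k ≤ n^ε. -/

import Mathlib

open Filter Finset
open scoped Classical

/-- Ordered binary trees: every node has exactly two or no children. -/
inductive BT : Type
  | leaf : BT
  | node : BT → BT → BT
deriving DecidableEq

namespace BT

/-- The size of a binary tree: its number of leaves. -/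
def size : BT → ℕ
  | leaf => 1
  | node l r => size l + size r

/-- The multiset of all fringe subtrees of a tree (one for every node). -/
def fringe : BT → Multiset BT
  | leaf => {leaf}
  | node l r => node l r ::ₘ (fringe l + fringe r)

/-- The finset of all ordered binary trees with `n` leaves. -/
def treesOfSize : ℕ → Finset BT
  | 0 => ∅
  | 1 => {leaf}
  | n + 2 =>
    (Finset.range (n + 1)).attach.biUnion fun k =>
      ((treesOfSize (k.1 + 1)) ×ˢ (treesOfSize (n + 1 - k.1))).image fun p => node p.1 p.2
  decreasing_by
    · have := Finset.mem_range.mp k.2; omega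
    · omega

/-- Boolean test whether two ordered binary trees are isomorphic as unordered trees. -/
def isoB : BT → BT → Bool
  | leaf, leaf => true
  | leaf, node _ _ => false
  | node _ _, leaf => false
  | node l1 r1, node l2 r2 => (isoB l1 l2 && isoB r1 r2) || (isoB l1 r2 && isoB r1 l2)

/-- An injective encoding of ordered binary trees into the natural numbers. -/
def encode : BT → ℕ
  | leaf => 0
  | node l r => Nat.pair (encode l) (encode r) + 1

/-- The canonical representative of the isomorphism class of a binary tree:
two trees are isomorphic (equal as unordered trees) iff their canonical forms agree. -/
def canon : BT → BT
  | leaf => leaf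
  | node l r =>
    let l' := canon l
    let r' := canon r
    if encode l' ≤ encode r' then node l' r' else node r' l'

/-- Number of isomorphism classes of unordered binary trees represented among
the fringe subtrees of `t`. -/
def isoClasses (t : BT) : ℕ := ((fringe t).toFinset.image canon).card

/-- Number of distinct ordered binary trees occurring among the fringe subtrees of `t`. -/
def numDistinct (t : BT) : ℕ := (fringe t).toFinset.card

/-- The probability of a tree under the binary search tree model. -/
noncomputable def pbst (t : BT) : ℝ :=
  ((fringe t).map fun s => if 1 < size s then (1 : ℝ) / ((size s : ℝ) - 1) else 1).prod

/-- Expectation of `f` under the uniform distribution on trees with `n` leaves. -/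
noncomputable def unifE (n : ℕ) (f : BT → ℝ) : ℝ :=
  (∑ t ∈ treesOfSize n, f t) / (treesOfSize n).card

/-- Probability of an event under the uniform distribution on trees with `n` leaves. -/
noncomputable def unifP (n : ℕ) (p : BT → Prop) : ℝ :=
  ((treesOfSize n).filter p).card / (treesOfSize n).card

/-- Expectation of `f` under the binary search tree distribution on trees with `n` leaves. -/
noncomputable def bstE (n : ℕ) (f : BT → ℝ) : ℝ :=
  ∑ t ∈ treesOfSize n, pbst t * f t

/-- Probability of an event under the binary search tree distribution on trees with `n` leaves. -/
noncomputable def bstP (n : ℕ) (p : BT → Prop) : ℝ :=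
  ∑ t ∈ (treesOfSize n).filter p, pbst t

end BT

/-!
At the root, a random binary search tree with `m + 2` leaves splits into two independent random
binary search trees with `j + 1` and `m + 1 - j` leaves, `j` uniform in `0, …, m`. For `n > k` the
number `X_n` of fringe subtrees in `S_k` is the sum of the counts in the two subtrees, so its first
two moments obey linear recursions. With `p = p_k` the mean is exactly `p · 2n/(k(k+1))` for
`n > k`, and `E X_n² ≤ E X_n + p² ((2n/(k(k+1)))² + n/k²)` by induction: below `2k` the count
is `0` or `1`, and beyond it the polynomial is a fixed point of the recursion up to the
contribution of the deviation of the mean from linearity at sizes `≤ k`, whose weighted sum is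
`(1 - k)/3 ≤ 0`. So `Var X_n ≤ p · 2n/(k(k+1)) + p² n/k² ≤ 3pn/k²` for `n ≥ 2k`, and
`k ≤ n^ε` with `ε < 1/3` rules out `n < 2k` except for `k = n = 1`.
-/

theorem sum_range_reflect_add_one {M : Type*} [AddCommMonoid M] (f : ℕ → ℕ → M) (N : ℕ) :
    ∑ j ∈ range N, f (j + 1) (N - j) = ∑ j ∈ range N, f (N - j) (j + 1) := by
  rw [← sum_range_reflect]
  refine sum_congr rfl fun j hj => ?_
  have := mem_range.1 hj
  rw [show N - 1 - j + 1 = N - j by omega, show N - (N - 1 - j) = j + 1 by omega]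

theorem sum_range_sub_mul_succ (x : ℝ) (N : ℕ) :
    ∑ j ∈ range N, (x - j) * (j + 1) = x * (N * (N + 1) / 2) - (N - 1) * N * (N + 1) / 3 := by
  induction N with
  | zero => simp
  | succ N ih => rw [sum_range_succ, ih]; push_cast; ring

theorem sum_range_sq_add (b c : ℝ) (N : ℕ) :
    ∑ j ∈ range N, ((b * (j + 1 : ℕ)) ^ 2 + (j + 1 : ℕ) / c) =
      b ^ 2 * (N * (N + 1) * (2 * N + 1) / 6) + N * (N + 1) / (2 * c) := by
  induction N with
  | zero => simp
  | succ N ih => rw [sum_range_succ, ih]; push_cast; ring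

theorem pow_three_le_of_le_rpow {x y ε : ℝ} (hx : 1 ≤ x) (hε : ε ≤ 1 / 3) (hy : 0 ≤ y)
    (h : y ≤ x ^ ε) : y ^ 3 ≤ x :=
  calc y ^ 3 ≤ (x ^ (1 / 3 : ℝ)) ^ 3 :=
        pow_le_pow_left₀ hy (h.trans (Real.rpow_le_rpow_of_exponent_le hx hε)) 3
    _ = x := by
      rw [← Real.rpow_natCast, ← Real.rpow_mul (by linarith)]
      norm_num

namespace BT

variable {s : Finset BT} {k : ℕ}

theorem size_pos (t : BT) : 0 < t.size := by
  induction t with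
  | leaf => exact Nat.one_pos
  | node l r ihl _ => simp only [size]; omega

theorem treesOfSize_zero : treesOfSize 0 = ∅ := by rw [treesOfSize]

theorem treesOfSize_one : treesOfSize 1 = {leaf} := by rw [treesOfSize]

theorem treesOfSize_add_two (n : ℕ) :
    treesOfSize (n + 2) = (range (n + 1)).attach.biUnion fun k =>
      ((treesOfSize (k.1 + 1)) ×ˢ (treesOfSize (n + 1 - k.1))).image fun p => node p.1 p.2 := by
  rw [treesOfSize]

theorem mem_treesOfSize {t : BT} {n : ℕ} : t ∈ treesOfSize n ↔ t.size = n := by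
  induction t generalizing n with
  | leaf =>
    rcases n with _ | _ | n <;> simp [treesOfSize_zero, treesOfSize_one, treesOfSize_add_two, size]
  | node l r ihl ihr =>
    have := l.size_pos
    have := r.size_pos
    rcases n with _ | _ | n
    · simp only [treesOfSize_zero, notMem_empty, size, false_iff]; omega
    · simp only [zero_add, treesOfSize_one, mem_singleton, reduceCtorEq, size, false_iff]
      omega
    · simp only [treesOfSize_add_two, mem_biUnion, mem_attach, true_and, Subtype.exists, mem_range,
        mem_image, mem_product, Prod.exists, size]
      constructor
      · rintro ⟨j, hj, _, _, ⟨hl, hr⟩, he⟩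
        simp only [node.injEq] at he
        obtain ⟨rfl, rfl⟩ := he
        rw [ihl] at hl
        rw [ihr] at hr
        omega
      · intro h
        exact ⟨l.size - 1, by omega, l, r, ⟨ihl.2 (by omega), ihr.2 (by omega)⟩, rfl⟩

theorem sum_treesOfSize_add_two {M : Type*} [AddCommMonoid M] (n : ℕ) (f : BT → M) :
    ∑ t ∈ treesOfSize (n + 2), f t =
      ∑ j ∈ range (n + 1), ∑ l ∈ treesOfSize (j + 1), ∑ r ∈ treesOfSize (n + 1 - j),
        f (node l r) := by
  rw [treesOfSize_add_two, sum_biUnion, ← sum_attach (range (n + 1))]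
  · refine sum_congr rfl fun j _ => ?_
    rw [sum_image fun p _ q _ h => ?_, sum_product]
    simp only [node.injEq] at h
    exact Prod.ext h.1 h.2
  · intro j _ j' _ hne
    simp only [Function.onFun, disjoint_left, mem_image, mem_product]
    rintro _ ⟨⟨l, r⟩, ⟨hl, -⟩, rfl⟩ ⟨⟨l', r'⟩, ⟨hl', -⟩, he⟩
    simp only [node.injEq] at he
    rw [mem_treesOfSize, he.1] at hl'
    rw [mem_treesOfSize, hl'] at hl
    exact hne (Subtype.ext (by omega))

theorem pbst_leaf : pbst leaf = 1 := by simp [pbst, fringe, size]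

theorem pbst_node (l r : BT) :
    pbst (node l r) = pbst l * pbst r / ((l.size : ℝ) + r.size - 1) := by
  have h : 1 < l.size + r.size := by
    have := l.size_pos; have := r.size_pos; omega
  simp only [pbst, fringe, Multiset.map_cons, Multiset.prod_cons, Multiset.map_add,
    Multiset.prod_add, size, h, if_true]
  push_cast
  ring

theorem pbst_nonneg (t : BT) : 0 ≤ pbst t := by
  induction t with
  | leaf => rw [pbst_leaf]; exact zero_le_one
  | node l r ihl ihr =>
    have : (1 : ℝ) ≤ l.size := by exact_mod_cast l.size_pos
    have : (1 : ℝ) ≤ r.size := by exact_mod_cast r.size_pos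
    rw [pbst_node]
    exact div_nonneg (mul_nonneg ihl ihr) (by linarith)

theorem bstE_zero (f : BT → ℝ) : bstE 0 f = 0 := by simp [bstE, treesOfSize_zero]

theorem bstE_one (f : BT → ℝ) : bstE 1 f = f leaf := by simp [bstE, treesOfSize_one, pbst_leaf]

theorem bstE_const_mul (n : ℕ) (c : ℝ) (f : BT → ℝ) :
    bstE n (fun t => c * f t) = c * bstE n f := by
  simp only [bstE, mul_sum, mul_left_comm]

/-- Expectation of `F L R` for the two root subtrees `L`, `R` of a random binary search tree
with `m + 2` leaves: `L` has `j + 1` leaves with probability `1 / (m + 1)` for each `j ≤ m`, and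
given their sizes `L` and `R` are independent random binary search trees. -/
noncomputable def rootE (m : ℕ) (F : BT → BT → ℝ) : ℝ :=
  (m + 1 : ℝ)⁻¹ * ∑ j ∈ range (m + 1), ∑ l ∈ treesOfSize (j + 1),
    ∑ r ∈ treesOfSize (m + 1 - j), pbst l * pbst r * F l r

theorem bstE_add_two (m : ℕ) (f : BT → ℝ) :
    bstE (m + 2) f = rootE m fun l r => f (node l r) := by
  rw [bstE, sum_treesOfSize_add_two, rootE, mul_sum]
  refine sum_congr rfl fun j hj => ?_
  have hj : j ≤ m + 1 := by have := mem_range.1 hj; omega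
  simp only [mul_sum]
  refine sum_congr rfl fun l hl => sum_congr rfl fun r hr => ?_
  rw [pbst_node, mem_treesOfSize.1 hl, mem_treesOfSize.1 hr,
    show (((j + 1 : ℕ) : ℝ) + ((m + 1 - j : ℕ) : ℝ) - 1) = m + 1 by
      push_cast [Nat.cast_sub hj]; ring]
  ring

theorem rootE_congr {m : ℕ} {F G : BT → BT → ℝ}
    (h : ∀ l r, l.size + r.size = m + 2 → F l r = G l r) : rootE m F = rootE m G := by
  unfold rootE
  congr 1
  refine sum_congr rfl fun j hj => sum_congr rfl fun l hl => sum_congr rfl fun r hr => ?_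
  rw [h l r (by rw [mem_treesOfSize.1 hl, mem_treesOfSize.1 hr]; have := mem_range.1 hj; omega)]

theorem rootE_add (m : ℕ) (F G : BT → BT → ℝ) :
    rootE m (fun l r => F l r + G l r) = rootE m F + rootE m G := by
  simp only [rootE, mul_add, sum_add_distrib]

theorem rootE_mul (m : ℕ) (g h : BT → ℝ) :
    rootE m (fun l r => g l * h r) =
      (m + 1 : ℝ)⁻¹ * ∑ j ∈ range (m + 1), bstE (j + 1) g * bstE (m + 1 - j) h := by
  simp only [rootE, bstE, sum_mul_sum]
  congr 1
  exact sum_congr rfl fun j _ => sum_congr rfl fun l _ => sum_congr rfl fun r _ => by ring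

theorem sum_pbst_treesOfSize {n : ℕ} (hn : 0 < n) : ∑ t ∈ treesOfSize n, pbst t = 1 := by
  induction n using Nat.strong_induction_on with
  | _ n ih =>
    rcases n with _ | _ | m
    · exact absurd hn (lt_irrefl 0)
    · simp [treesOfSize_one, pbst_leaf]
    · have hsplit := bstE_add_two m fun _ => 1
      have hprod := rootE_mul m (fun _ => 1) (fun _ => 1)
      simp only [bstE, mul_one] at hsplit hprod
      rw [hsplit, hprod, sum_congr rfl fun j hj => by
        rw [ih (j + 1) (by have := mem_range.1 hj; omega) j.succ_pos,
          ih (m + 1 - j) (by omega) (by have := mem_range.1 hj; omega), mul_one]]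
      simp only [sum_const, card_range, nsmul_eq_mul, mul_one]
      push_cast
      exact inv_mul_cancel₀ (by positivity)

theorem bstE_const {n : ℕ} (hn : 0 < n) (c : ℝ) : bstE n (fun _ => c) = c := by
  rw [bstE, ← sum_mul, sum_pbst_treesOfSize hn, one_mul]

theorem rootE_left (m : ℕ) (g : BT → ℝ) :
    rootE m (fun l _ => g l) = (m + 1 : ℝ)⁻¹ * ∑ j ∈ range (m + 1), bstE (j + 1) g := by
  have h := rootE_mul m g fun _ => 1
  simp only [mul_one] at h
  rw [h, sum_congr rfl fun j hj => by
    rw [bstE_const (by have := mem_range.1 hj; omega), mul_one]]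

theorem rootE_right (m : ℕ) (h : BT → ℝ) :
    rootE m (fun _ r => h r) = (m + 1 : ℝ)⁻¹ * ∑ j ∈ range (m + 1), bstE (j + 1) h := by
  have hm := rootE_mul m (fun _ => 1) h
  simp only [one_mul] at hm
  rw [hm, sum_range_reflect_add_one fun a b => bstE a (fun _ => 1) * bstE b h,
    sum_congr rfl fun j hj => by
      rw [bstE_const (by have := mem_range.1 hj; omega), one_mul]]

def fringeCount (s : Finset BT) (t : BT) : ℕ := (fringe t).countP (· ∈ s)

theorem fringeCount_leaf (s : Finset BT) :
    fringeCount s leaf = if leaf ∈ s then 1 else 0 := by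
  rw [fringeCount, fringe, ← Multiset.cons_zero, Multiset.countP_cons, Multiset.countP_zero,
    zero_add]

theorem fringeCount_node (s : Finset BT) (l r : BT) :
    fringeCount s (node l r) =
      (if node l r ∈ s then 1 else 0) + fringeCount s l + fringeCount s r := by
  simp only [fringeCount, fringe, Multiset.countP_cons, Multiset.countP_add]
  ring

theorem size_le_of_mem_fringe {u t : BT} (h : u ∈ fringe t) : u.size ≤ t.size := by
  induction t with
  | leaf => simp only [fringe, Multiset.mem_singleton] at h; rw [h]
  | node l r ihl ihr =>
    simp only [fringe, Multiset.mem_cons, Multiset.mem_add] at h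
    rcases h with rfl | h | h
    · rfl
    · have := ihl h; simp only [size]; omega
    · have := ihr h; simp only [size]; omega

theorem fringeCount_eq_zero (hs : s ⊆ treesOfSize k) {t : BT} (ht : t.size < k) :
    fringeCount s t = 0 :=
  Multiset.countP_eq_zero.2 fun u hu hus => by
    have := size_le_of_mem_fringe hu
    rw [mem_treesOfSize.1 (hs hus)] at this
    omega

theorem mul_fringeCount_le_size (hs : s ⊆ treesOfSize k) (t : BT) :
    k * fringeCount s t ≤ t.size := by
  induction t with
  | leaf =>
    rw [fringeCount_leaf]
    split_ifs with h
    · rw [← mem_treesOfSize.1 (hs h)]; rfl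
    · simp [size]
  | node l r ihl ihr =>
    rw [fringeCount_node]
    split_ifs with h
    · have hsize := mem_treesOfSize.1 (hs h)
      simp only [size] at hsize ⊢
      have := l.size_pos
      have := r.size_pos
      rw [fringeCount_eq_zero hs (t := l) (by omega), fringeCount_eq_zero hs (t := r) (by omega)]
      omega
    · simp only [size, Nat.zero_add, Nat.mul_add]
      omega

theorem fringeCount_le_one (hs : s ⊆ treesOfSize k) {t : BT}
    (ht : t.size < 2 * k) : fringeCount s t ≤ 1 := by
  by_contra! h
  have := mul_fringeCount_le_size hs t
  nlinarith

theorem sum_pbst_le_one (hs : s ⊆ treesOfSize k) : ∑ t ∈ s, pbst t ≤ 1 := by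
  rcases Nat.eq_zero_or_pos k with rfl | hk
  · rw [treesOfSize_zero, subset_empty] at hs
    simp [hs]
  · rw [← sum_pbst_treesOfSize hk]
    exact sum_le_sum_of_subset_of_nonneg hs fun t _ _ => pbst_nonneg t

theorem bstE_indicator (hs : s ⊆ treesOfSize k) (n : ℕ) :
    bstE n (fun t => if t ∈ s then 1 else 0) = if n = k then ∑ t ∈ s, pbst t else 0 := by
  simp only [bstE, mul_ite, mul_one, mul_zero]
  rw [sum_ite_mem]
  split_ifs with h
  · rw [h, inter_eq_right.2 hs]
  · refine sum_eq_zero fun t ht => absurd ?_ h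
    rw [mem_inter] at ht
    exact (mem_treesOfSize.1 ht.1).symm.trans (mem_treesOfSize.1 (hs ht.2))

noncomputable def meanSlope (k : ℕ) : ℝ := 2 / (k * (k + 1))

/-- `(∑ t ∈ s, pbst t) * fringeMean k n` is the expected number of fringe subtrees in `s` of a
random binary search tree with `n` leaves, for `s ⊆ treesOfSize k`. -/
noncomputable def fringeMean (k n : ℕ) : ℝ :=
  if n < k then 0 else if n = k then 1 else meanSlope k * n

theorem meanSlope_nonneg (k : ℕ) : 0 ≤ meanSlope k := by unfold meanSlope; positivity

theorem meanSlope_mul (hk : 0 < k) : meanSlope k * (k * (k + 1)) = 2 := by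
  unfold meanSlope
  field_simp

theorem sum_fringeMean (hk : 0 < k) (N : ℕ) :
    ∑ j ∈ range N, fringeMean k (j + 1) =
      if N < k then 0 else meanSlope k * (N * (N + 1) / 2) := by
  induction N with
  | zero => simp [hk]
  | succ N ih =>
    rw [sum_range_succ, ih, fringeMean]
    rcases lt_trichotomy (N + 1) k with h | rfl | h
    · simp [h, show N < k by omega]
    · have := meanSlope_mul hk
      simp only [lt_irrefl, if_false, lt_add_iff_pos_right, zero_lt_one, if_true]
      push_cast at this ⊢
      linear_combination -this / 2
    · simp only [show ¬N + 1 < k by omega, show ¬N < k by omega, show N + 1 ≠ k by omega,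
        if_false]
      push_cast
      ring

theorem fringeMean_add_two (hk : 0 < k) (m : ℕ) :
    fringeMean k (m + 2) =
      (if m + 2 = k then 1 else 0) +
        2 / (m + 1) * ∑ j ∈ range (m + 1), fringeMean k (j + 1) := by
  rw [sum_fringeMean hk, fringeMean]
  rcases lt_trichotomy (m + 2) k with h | h | h
  · simp [h, show m + 1 < k by omega, h.ne]
  · simp [h, show m + 1 < k by omega]
  · simp only [show ¬m + 2 < k by omega, show m + 2 ≠ k by omega, show ¬m + 1 < k by omega,
      if_false, zero_add]
    field_simp
    push_cast
    ring

theorem bstE_fringeCount (hs : s ⊆ treesOfSize k) (hk : 0 < k) (n : ℕ) :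
    bstE n (fun t => (fringeCount s t : ℝ)) = (∑ t ∈ s, pbst t) * fringeMean k n := by
  induction n using Nat.strong_induction_on with
  | _ n ih =>
    rcases n with _ | _ | m
    · simp [bstE_zero, fringeMean, hk]
    · have h := bstE_indicator hs 1
      rw [bstE_one] at h
      rw [bstE_one, fringeCount_leaf]
      push_cast
      rw [h]
      rcases (by omega : 1 = k ∨ 1 < k) with rfl | h1
      · simp [fringeMean]
      · simp [fringeMean, h1, h1.ne]
    · calc bstE (m + 2) (fun t => (fringeCount s t : ℝ))
          = rootE m fun l r =>
              (if node l r ∈ s then 1 else 0) + (fringeCount s l : ℝ) + fringeCount s r := by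
            rw [bstE_add_two]
            simp only [fringeCount_node]
            push_cast
            rfl
        _ = bstE (m + 2) (fun t => if t ∈ s then 1 else 0) + 2 * ((m + 1 : ℝ)⁻¹ *
              ∑ j ∈ range (m + 1), bstE (j + 1) fun t => (fringeCount s t : ℝ)) := by
            rw [rootE_add, rootE_add, rootE_left, rootE_right, bstE_add_two]
            ring
        _ = (∑ t ∈ s, pbst t) * fringeMean k (m + 2) := by
            rw [bstE_indicator hs, fringeMean_add_two hk, sum_congr rfl fun j hj =>
              ih (j + 1) (by have := mem_range.1 hj; omega), ← mul_sum]
            split_ifs <;> ring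

/-- `p * fringeMean k n + p ^ 2 * fringeSqMajorant k n` bounds the second moment of the number of
fringe subtrees in `s` (with `p = ∑ t ∈ s, pbst t`); below `2 * k` that number is `0` or `1`. -/
noncomputable def fringeSqMajorant (k n : ℕ) : ℝ :=
  if n < 2 * k then 0 else (meanSlope k * n) ^ 2 + n / k ^ 2

noncomputable def meanDefect (k n : ℕ) : ℝ := fringeMean k n - meanSlope k * n

theorem fringeMean_of_lt {n : ℕ} (h : n < k) : fringeMean k n = 0 := if_pos h

theorem fringeMean_self (k : ℕ) : fringeMean k k = 1 := by simp [fringeMean]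

theorem meanDefect_of_lt {n : ℕ} (h : k < n) : meanDefect k n = 0 := by
  simp [meanDefect, fringeMean, h.not_gt, h.ne']

theorem sum_mul_meanDefect (hk : 0 < k) {N : ℕ} (hN : k ≤ N) :
    ∑ j ∈ range N, ((N - j : ℕ) : ℝ) * meanDefect k (j + 1) = (1 - k) / 3 := by
  obtain ⟨k, rfl⟩ : ∃ k', k = k' + 1 := ⟨k - 1, by omega⟩
  have hlow : ∀ j ∈ range k, ((N - j : ℕ) : ℝ) * meanDefect (k + 1) (j + 1) =
      -meanSlope (k + 1) * ((N - j) * (j + 1)) := fun j hj => by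
    have := mem_range.1 hj
    rw [meanDefect, fringeMean, if_pos (by omega), Nat.cast_sub (by omega)]
    push_cast
    ring
  rw [← sum_subset (range_subset_range.2 hN) fun j _ hj => by
      rw [meanDefect_of_lt (by simp only [mem_range] at hj; omega), mul_zero],
    sum_range_succ, sum_congr rfl hlow, ← mul_sum, sum_range_sub_mul_succ, meanDefect,
    fringeMean_self, Nat.cast_sub (by omega), meanSlope]
  push_cast
  field_simp
  ring

theorem sum_fringeMean_mul_fringeMean (hk : 0 < k) {N : ℕ} (hN : 2 * k ≤ N) :
    ∑ j ∈ range N, fringeMean k (j + 1) * fringeMean k (N - j) =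
      meanSlope k ^ 2 * (N * (N + 1) * (N + 2) / 6) + 2 * meanSlope k * ((1 - k) / 3) := by
  set b := meanSlope k
  have hterm : ∀ j ∈ range N, fringeMean k (j + 1) * fringeMean k (N - j) =
      b ^ 2 * ((N - j) * (j + 1)) + b * (((N - j : ℕ) : ℝ) * meanDefect k (j + 1)) +
        b * (((j + 1 : ℕ) : ℝ) * meanDefect k (N - j)) := fun j hj => by
    have hj := mem_range.1 hj
    -- at most one of `j + 1` and `N - j` is `≤ k`, since they add up to `N + 1 > 2 * k`
    have hdefect : meanDefect k (j + 1) * meanDefect k (N - j) = 0 := by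
      rcases lt_or_ge k (j + 1) with h | h
      · rw [meanDefect_of_lt h, zero_mul]
      · rw [meanDefect_of_lt (show k < N - j by omega), mul_zero]
    have hmean : ∀ n, fringeMean k n = b * n + meanDefect k n := fun n => by
      rw [meanDefect]; ring
    rw [hmean, hmean, Nat.cast_sub hj.le]
    push_cast
    linear_combination hdefect
  rw [sum_congr rfl hterm, sum_add_distrib, sum_add_distrib,
    ← sum_range_reflect_add_one fun a c => b * ((c : ℝ) * meanDefect k a),
    ← mul_sum, ← mul_sum,
    sum_mul_meanDefect hk (by omega), sum_range_sub_mul_succ]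
  ring

theorem fringeSqMajorant_supersolution_of_le (hk : 0 < k) {N : ℕ} (hN : 2 * k ≤ N) :
    2 * ∑ j ∈ range N, fringeSqMajorant k (j + 1) +
        2 * ∑ j ∈ range N, fringeMean k (j + 1) * fringeMean k (N - j) ≤
      N * fringeSqMajorant k (N + 1) := by
  have hsq : ∑ j ∈ range N, fringeSqMajorant k (j + 1) ≤
      ∑ j ∈ range N, ((meanSlope k * (j + 1 : ℕ)) ^ 2 + (j + 1 : ℕ) / (k : ℝ) ^ 2) :=
    sum_le_sum fun j _ => by
      unfold fringeSqMajorant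
      split_ifs
      · positivity
      · rfl
  have hdefect : meanSlope k * (1 - k) ≤ 0 :=
    mul_nonpos_of_nonneg_of_nonpos (meanSlope_nonneg k) (by
      have : (1 : ℝ) ≤ k := by exact_mod_cast hk
      linarith)
  rw [sum_range_sq_add] at hsq
  rw [sum_fringeMean_mul_fringeMean hk hN, fringeSqMajorant, if_neg (by omega)]
  push_cast
  linear_combination 2 * hsq + 4 / 3 * hdefect

theorem fringeSqMajorant_supersolution_of_eq (hk : 0 < k) {N : ℕ} (hN : N + 1 = 2 * k) :
    2 * ∑ j ∈ range N, fringeSqMajorant k (j + 1) +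
        2 * ∑ j ∈ range N, fringeMean k (j + 1) * fringeMean k (N - j) ≤
      N * fringeSqMajorant k (N + 1) := by
  have hsq : ∑ j ∈ range N, fringeSqMajorant k (j + 1) = 0 :=
    sum_eq_zero fun j hj => if_pos (by simp only [mem_range] at hj; omega)
  have hconv : ∑ j ∈ range N, fringeMean k (j + 1) * fringeMean k (N - j) = 1 := by
    rw [sum_eq_single (k - 1) (fun j hj hne => ?_) (fun h => absurd (mem_range.2 (by omega)) h),
      show k - 1 + 1 = k by omega, show N - (k - 1) = k by omega, fringeMean_self, one_mul]
    rcases lt_or_ge (j + 1) k with h | h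
    · rw [fringeMean_of_lt h, zero_mul]
    · have := mem_range.1 hj
      rw [fringeMean_of_lt (show N - j < k by omega), mul_zero]
  have hk2 : (0 : ℝ) < k ^ 2 := by positivity
  have hNk : (N : ℝ) + 1 = 2 * k := by exact_mod_cast hN
  have hlin : 2 ≤ N * ((N + 1) / (k : ℝ) ^ 2) := by
    rw [mul_div_assoc', le_div_iff₀ hk2]
    have : (1 : ℝ) ≤ k := by exact_mod_cast hk
    nlinarith
  rw [hsq, hconv, fringeSqMajorant, if_neg (by omega)]
  push_cast
  nlinarith [sq_nonneg (meanSlope k * (N + 1)), N.cast_nonneg (α := ℝ)]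

theorem fringeSqMajorant_supersolution (hk : 0 < k) {N : ℕ} (hN : 2 * k ≤ N + 1) :
    2 * ∑ j ∈ range N, fringeSqMajorant k (j + 1) +
        2 * ∑ j ∈ range N, fringeMean k (j + 1) * fringeMean k (N - j) ≤
      N * fringeSqMajorant k (N + 1) := by
  rcases hN.eq_or_lt with h | h
  · exact fringeSqMajorant_supersolution_of_eq hk h.symm
  · exact fringeSqMajorant_supersolution_of_le hk (by omega)

theorem bstE_fringeCount_sq_add_two (hs : s ⊆ treesOfSize k) {m : ℕ} (hm : k < m + 2) :
    bstE (m + 2) (fun t => (fringeCount s t : ℝ) ^ 2) =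
      (m + 1 : ℝ)⁻¹ *
        (2 * ∑ j ∈ range (m + 1), bstE (j + 1) (fun t => (fringeCount s t : ℝ) ^ 2) +
        2 * ∑ j ∈ range (m + 1), bstE (j + 1) (fun t => (fringeCount s t : ℝ)) *
          bstE (m + 1 - j) (fun t => (fringeCount s t : ℝ))) := by
  have hsplit : bstE (m + 2) (fun t => (fringeCount s t : ℝ) ^ 2) =
      rootE m fun l r => (fringeCount s l : ℝ) ^ 2 + (fringeCount s r : ℝ) ^ 2 +
        (2 * (fringeCount s l : ℝ)) * fringeCount s r := by
    rw [bstE_add_two]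
    refine rootE_congr fun l r hlr => ?_
    have hnode : node l r ∉ s := fun h => by
      have := mem_treesOfSize.1 (hs h)
      simp only [size] at this
      omega
    rw [fringeCount_node, if_neg hnode]
    push_cast
    ring
  rw [hsplit, rootE_add, rootE_add, rootE_left, rootE_right, rootE_mul]
  simp only [bstE_const_mul, mul_assoc, ← mul_sum]
  ring

theorem bstE_fringeCount_sq_le (hs : s ⊆ treesOfSize k) (hk : 0 < k) (n : ℕ) :
    bstE n (fun t => (fringeCount s t : ℝ) ^ 2) ≤
      (∑ t ∈ s, pbst t) * fringeMean k n +
        (∑ t ∈ s, pbst t) ^ 2 * fringeSqMajorant k n := by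
  set p := ∑ t ∈ s, pbst t
  induction n using Nat.strong_induction_on with
  | _ n ih =>
    rcases lt_or_ge n (2 * k) with hn | hn
    · have hsq : bstE n (fun t => (fringeCount s t : ℝ) ^ 2) =
          bstE n (fun t => (fringeCount s t : ℝ)) :=
        sum_congr rfl fun t ht => by
          have := fringeCount_le_one hs (t := t) (by rw [mem_treesOfSize.1 ht]; exact hn)
          rcases Nat.le_one_iff_eq_zero_or_eq_one.1 this with h | h <;> simp [h]
      rw [hsq, bstE_fringeCount hs hk, fringeSqMajorant, if_pos hn, mul_zero, add_zero]
    obtain ⟨m, rfl⟩ : ∃ m, n = m + 2 := ⟨n - 2, by omega⟩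
    calc bstE (m + 2) (fun t => (fringeCount s t : ℝ) ^ 2)
        = (m + 1 : ℝ)⁻¹ * (2 * ∑ j ∈ range (m + 1),
              bstE (j + 1) (fun t => (fringeCount s t : ℝ) ^ 2) +
            2 * ∑ j ∈ range (m + 1),
              p * fringeMean k (j + 1) * (p * fringeMean k (m + 1 - j))) := by
          rw [bstE_fringeCount_sq_add_two hs (by omega)]
          simp only [bstE_fringeCount hs hk]
          rfl
      _ ≤ (m + 1 : ℝ)⁻¹ * (2 * ∑ j ∈ range (m + 1),
              (p * fringeMean k (j + 1) + p ^ 2 * fringeSqMajorant k (j + 1)) +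
            2 * ∑ j ∈ range (m + 1),
              p * fringeMean k (j + 1) * (p * fringeMean k (m + 1 - j))) := by
          gcongr with j hj
          exact ih (j + 1) (by simp only [mem_range] at hj; omega)
      _ = p * (2 / (m + 1) * ∑ j ∈ range (m + 1), fringeMean k (j + 1)) +
            p ^ 2 * ((m + 1 : ℝ)⁻¹ * (2 * ∑ j ∈ range (m + 1), fringeSqMajorant k (j + 1) +
              2 * ∑ j ∈ range (m + 1), fringeMean k (j + 1) * fringeMean k (m + 1 - j))) := by
          simp only [sum_add_distrib, ← mul_sum, mul_mul_mul_comm p _ p, ← sq]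
          ring
      _ ≤ p * fringeMean k (m + 2) + p ^ 2 * fringeSqMajorant k (m + 2) := by
          rw [fringeMean_add_two hk, if_neg (by omega), zero_add]
          gcongr
          rw [inv_mul_le_iff₀ (by positivity)]
          exact_mod_cast fringeSqMajorant_supersolution hk (N := m + 1) (by omega)

theorem variance_majorant_le (hk : 0 < k) {n : ℕ} (hn : 2 * k ≤ n) {p : ℝ} (hp0 : 0 ≤ p)
    (hp1 : p ≤ 1) :
    p * fringeMean k n + p ^ 2 * fringeSqMajorant k n - (p * fringeMean k n) ^ 2 ≤
      3 * p * n / k ^ 2 := by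
  have hslope : meanSlope k ≤ 2 / k ^ 2 := by
    unfold meanSlope
    gcongr
    nlinarith
  rw [fringeMean, if_neg (by omega), if_neg (by omega), fringeSqMajorant, if_neg (by omega)]
  calc p * (meanSlope k * n) + p ^ 2 * ((meanSlope k * n) ^ 2 + n / k ^ 2) -
        (p * (meanSlope k * n)) ^ 2
      = p * n * meanSlope k + p ^ 2 * (n / k ^ 2) := by ring
    _ ≤ p * n * (2 / k ^ 2) + p * (n / k ^ 2) := by
      gcongr
      nlinarith
    _ = 3 * p * n / k ^ 2 := by ring

end BT

open BT in
theorem variance_fringe_occurrences_bst_general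
    (a ε : ℝ) (hε0 : 0 < ε) (hε : ε < 1 / 3)
    (S : ℕ → Finset BT) (hS : ∀ k, S k ⊆ treesOfSize k) :
    ∃ C : ℝ, 0 < C ∧ ∀ n k : ℕ, 0 < k → a * Real.log n ≤ (k : ℝ) → (k : ℝ) ≤ (n : ℝ) ^ ε →
      bstE n (fun t => ((Multiset.countP (· ∈ S k) (fringe t) : ℝ)) ^ 2)
          - (bstE n (fun t => (Multiset.countP (· ∈ S k) (fringe t) : ℝ))) ^ 2
        ≤ C * (∑ t ∈ S k, pbst t) * (n : ℝ) / (k : ℝ) ^ 2 := by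
  refine ⟨3, by norm_num, fun n k hk _ hkn => ?_⟩
  have hn : 1 ≤ n := by
    rcases Nat.eq_zero_or_pos n with rfl | hn
    · rw [Nat.cast_zero, Real.zero_rpow hε0.ne'] at hkn
      exact absurd hkn (by simpa using hk.ne')
    · exact hn
  have hp0 : 0 ≤ ∑ t ∈ S k, pbst t := sum_nonneg fun t _ => pbst_nonneg t
  change bstE n (fun t => (fringeCount (S k) t : ℝ) ^ 2) -
      bstE n (fun t => (fringeCount (S k) t : ℝ)) ^ 2 ≤ _
  rw [bstE_fringeCount (hS k) hk]
  refine (sub_le_sub_right (bstE_fringeCount_sq_le (hS k) hk n) _).trans ?_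
  rcases lt_or_ge n (2 * k) with hsmall | hlarge
  · have hk3 : k ^ 3 ≤ n := by
      exact_mod_cast pow_three_le_of_le_rpow (by exact_mod_cast hn) hε.le k.cast_nonneg hkn
    obtain rfl : k = 1 := by nlinarith [(by nlinarith : k ^ 2 < 2)]
    obtain rfl : n = 1 := by omega
    rw [fringeMean_self, fringeSqMajorant, if_pos (by norm_num)]
    push_cast
    nlinarith
  · exact variance_majorant_le hk hlarge hp0 (sum_pbst_le_one (hS k))

open BT in
/-- For fixed `a > 0`, `0 < ε < 1/3`, and sets `S_k ⊆ T_k` with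
`p_k = Σ_{t ∈ S_k} P_bst(t)`, there is a constant `C > 0` (depending only on `a` and
`ε`) such that the variance of the number `X_{n,k}` of fringe subtrees belonging to
`S_k` in a random binary search tree with `n` leaves satisfies
`Var(X_{n,k}) ≤ C·p_k·n/k²` for all `n` and all positive integers `k` with
`a·ln n ≤ k ≤ n^ε`. -/
theorem variance_fringe_occurrences_bst
    (a ε : ℝ) (ha : 0 < a) (hε0 : 0 < ε) (hε : ε < 1 / 3)
    (S : ℕ → Finset BT) (hS : ∀ k, S k ⊆ treesOfSize k) :
    ∃ C : ℝ, 0 < C ∧ ∀ n k : ℕ, 0 < k → a * Real.log n ≤ (k : ℝ) → (k : ℝ) ≤ (n : ℝ) ^ ε →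
      bstE n (fun t => ((Multiset.countP (· ∈ S k) (fringe t) : ℝ)) ^ 2)
          - (bstE n (fun t => (Multiset.countP (· ∈ S k) (fringe t) : ℝ))) ^ 2
        ≤ C * (∑ t ∈ S k, pbst t) * (n : ℝ) / (k : ℝ) ^ 2 :=
  variance_fringe_occurrences_bst_general a ε hε0 hε S hS
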